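/- If a formula F has a CL5⁻ proof, then F has a CL5⁻ proof containing no application of the empty cirquent axiom, and with no more applications of each of the other rules than the original proof. -/

import Mathlib

namespace CirquentCalc

/-- Formulas: literals (negation applied only to atoms), ∧, ∨. -/
inductive Fml where
  | pos : ℕ → Fml
  | neg : ℕ → Fml
  | and : Fml → Fml → Fml
  | or : Fml → Fml → Fml
deriving DecidableEq

namespace Fml

/-- Negation (pushed to atoms, as ¬ applies only to atoms). -/
def negate : Fml → Fml
  | pos n => neg n
  | neg n => pos n
  | and a b => or a.negate b.negate
  | or a b => and a.negate b.negate

/-- Substitution extended homomorphically. -/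
def subst (σ : ℕ → Fml) : Fml → Fml
  | pos n => σ n
  | neg n => (σ n).negate
  | and a b => and (a.subst σ) (b.subst σ)
  | or a b => or (a.subst σ) (b.subst σ)

/-- Classical evaluation under a truth assignment. -/
def eval (v : ℕ → Bool) : Fml → Bool
  | pos n => v n
  | neg n => !(v n)
  | and a b => a.eval v && b.eval v
  | or a b => a.eval v || b.eval v

/-- Number of positive occurrences of atom `a`. -/
def cPos (a : ℕ) : Fml → ℕ
  | pos n => if n = a then 1 else 0
  | neg _ => 0
  | and f g => f.cPos a + g.cPos a
  | or f g => f.cPos a + g.cPos a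

/-- Number of negative occurrences of atom `a`. -/
def cNeg (a : ℕ) : Fml → ℕ
  | pos _ => 0
  | neg n => if n = a then 1 else 0
  | and f g => f.cNeg a + g.cNeg a
  | or f g => f.cNeg a + g.cNeg a

/-- Total number of positive occurrences of atoms. -/
def posOcc : Fml → ℕ
  | pos _ => 1
  | neg _ => 0
  | and f g => f.posOcc + g.posOcc
  | or f g => f.posOcc + g.posOcc

/-- Length: total number of occurrences of literals and connectives. -/
def len : Fml → ℕ
  | pos _ => 1
  | neg _ => 1
  | and f g => f.len + g.len + 1
  | or f g => f.len + g.len + 1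

/-- Number of occurrences of ∧. -/
def nAnd : Fml → ℕ
  | pos _ => 0
  | neg _ => 0
  | and f g => f.nAnd + g.nAnd + 1
  | or f g => f.nAnd + g.nAnd

/-- Number of occurrences of ∨. -/
def nOr : Fml → ℕ
  | pos _ => 0
  | neg _ => 0
  | and f g => f.nOr + g.nOr
  | or f g => f.nOr + g.nOr + 1

end Fml

def Tautology (A : Fml) : Prop := ∀ v, A.eval v = true

/-- No atom has more than two occurrences. -/
def Binary (A : Fml) : Prop := ∀ a, A.cPos a + A.cNeg a ≤ 2

/-- Whenever an atom occurs twice, one occurrence is positive and one negative. -/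
def Normal (A : Fml) : Prop := ∀ a, A.cPos a ≤ 1 ∧ A.cNeg a ≤ 1

def AtomicLevel (σ : ℕ → Fml) : Prop := ∀ n, ∃ m, σ n = Fml.pos m

/-- `F` is an instance of `B`: σ(B) = F for some substitution σ. -/
def InstanceOf (F B : Fml) : Prop := ∃ σ, B.subst σ = F

/-- `F` is an atomic-level instance of `B`. -/
def AtomicInstanceOf (F B : Fml) : Prop := ∃ σ, AtomicLevel σ ∧ B.subst σ = F

/-- A cirquent: a pool of (occurrences of) formulas, and a list of ogroups,
each an (index-)set of oformulas of the pool. -/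
structure Cirquent where
  pool : List Fml
  groups : List (Finset ℕ)

def emptyCirquent : Cirquent := ⟨[], []⟩

def idCirquent (F : Fml) : Cirquent := ⟨[F.negate, F], [{0, 1}]⟩

/-- The cirquent with pool ⟨F⟩ and one ogroup containing F. -/
def fmlCirquent (F : Fml) : Cirquent := ⟨[F], [{0}]⟩

/-- Index renaming swapping `i` and `i+1`. -/
def swapIdx (i : ℕ) : ℕ → ℕ := fun j => if j = i then i + 1 else if j = i + 1 then i else j

/-- Index renaming when a new oformula is inserted at position `i`. -/
def insShift (i : ℕ) : ℕ → ℕ := fun j => if j < i then j else j + 1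

/-- Index renaming when the oformulas at positions `i`, `i+1` are merged into one at `i`. -/
def mergeIdx (i : ℕ) : ℕ → ℕ := fun j => if j ≤ i then j else j - 1

/-- Mix: placing the two premise cirquents side by side. -/
def MixStep (A B C : Cirquent) : Prop :=
  C.pool = A.pool ++ B.pool ∧
  C.groups = A.groups ++ B.groups.map (Finset.image (· + A.pool.length))

/-- Oformula exchange: swap two adjacent oformulas, preserving containment. -/
def OfExchStep (P C : Cirquent) : Prop :=
  ∃ (l₁ l₂ : List Fml) (F G : Fml),
    P.pool = l₁ ++ F :: G :: l₂ ∧ C.pool = l₁ ++ G :: F :: l₂ ∧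
    C.groups = P.groups.map (Finset.image (swapIdx l₁.length))

/-- Ogroup exchange: swap two adjacent ogroups. -/
def OgExchStep (P C : Cirquent) : Prop :=
  C.pool = P.pool ∧
  ∃ (g₁ g₂ : List (Finset ℕ)) (Γ Δ : Finset ℕ),
    P.groups = g₁ ++ Γ :: Δ :: g₂ ∧ C.groups = g₁ ++ Δ :: Γ :: g₂

/-- Pool weakening: insert a new oformula, contained in no ogroup. -/
def PoolWeakStep (P C : Cirquent) : Prop :=
  ∃ (l₁ l₂ : List Fml) (F : Fml),
    P.pool = l₁ ++ l₂ ∧ C.pool = l₁ ++ F :: l₂ ∧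
    C.groups = P.groups.map (Finset.image (insShift l₁.length))

/-- Ogroup weakening: add a new arc between a pre-existing ogroup and oformula. -/
def OgWeakStep (P C : Cirquent) : Prop :=
  C.pool = P.pool ∧
  ∃ (g₁ g₂ : List (Finset ℕ)) (Γ : Finset ℕ) (j : ℕ),
    j < P.pool.length ∧ j ∉ Γ ∧
    P.groups = g₁ ++ Γ :: g₂ ∧ C.groups = g₁ ++ insert j Γ :: g₂

/-- Downward duplication: replace an ogroup by two adjacent copies of it. -/
def DupDownStep (P C : Cirquent) : Prop :=
  C.pool = P.pool ∧
  ∃ (g₁ g₂ : List (Finset ℕ)) (Γ : Finset ℕ),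
    P.groups = g₁ ++ Γ :: g₂ ∧ C.groups = g₁ ++ Γ :: Γ :: g₂

/-- Upward duplication: the converse of downward duplication. -/
def DupUpStep (P C : Cirquent) : Prop :=
  C.pool = P.pool ∧
  ∃ (g₁ g₂ : List (Finset ℕ)) (Γ : Finset ℕ),
    P.groups = g₁ ++ Γ :: Γ :: g₂ ∧ C.groups = g₁ ++ Γ :: g₂

/-- ∨-introduction: merge two adjacent oformulas F, G into F ∨ G. -/
def OrIntroStep (P C : Cirquent) : Prop :=
  ∃ (l₁ l₂ : List Fml) (F G : Fml),
    P.pool = l₁ ++ F :: G :: l₂ ∧ C.pool = l₁ ++ (Fml.or F G) :: l₂ ∧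
    C.groups = P.groups.map (Finset.image (mergeIdx l₁.length))

/-- The merging of the ogroup list in ∧-introduction: no ogroup contains both `i`
and `i+1`; every ogroup containing `i` is immediately followed by one containing
`i+1` and vice versa; such pairs are merged. -/
inductive AndMerge (i : ℕ) : List (Finset ℕ) → List (Finset ℕ) → Prop where
  | nil : AndMerge i [] []
  | skip {Γ : Finset ℕ} {l l' : List (Finset ℕ)} :
      i ∉ Γ → (i + 1) ∉ Γ → AndMerge i l l' → AndMerge i (Γ :: l) (Γ :: l')
  | merge {Γ Δ : Finset ℕ} {l l' : List (Finset ℕ)} :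
      i ∈ Γ → (i + 1) ∉ Γ → (i + 1) ∈ Δ → i ∉ Δ →
      AndMerge i l l' → AndMerge i (Γ :: Δ :: l) ((Γ ∪ Δ) :: l')

/-- ∧-introduction. -/
def AndIntroStep (P C : Cirquent) : Prop :=
  ∃ (l₁ l₂ : List Fml) (F G : Fml) (merged : List (Finset ℕ)),
    P.pool = l₁ ++ F :: G :: l₂ ∧ C.pool = l₁ ++ (Fml.and F G) :: l₂ ∧
    AndMerge l₁.length P.groups merged ∧
    C.groups = merged.map (Finset.image (mergeIdx l₁.length))

inductive RuleName where
  | emptyAx | idAx | mix | ofExch | ogExch | poolWeak | ogWeak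
  | dupDown | dupUp | orIntro | andIntro
deriving DecidableEq

/-- The unary (one-premise) rules, by name. -/
def unRel : RuleName → Cirquent → Cirquent → Prop
  | .ofExch => OfExchStep
  | .ogExch => OgExchStep
  | .poolWeak => PoolWeakStep
  | .ogWeak => OgWeakStep
  | .dupDown => DupDownStep
  | .dupUp => DupUpStep
  | .orIntro => OrIntroStep
  | .andIntro => AndIntroStep
  | _ => fun _ _ => False

/-- Proof trees: each node is labeled by its cirquent and the rule used. -/
inductive PTree where
  | leaf (C : Cirquent) (r : RuleName)
  | un (C : Cirquent) (r : RuleName) (p : PTree)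
  | bin (C : Cirquent) (r : RuleName) (p q : PTree)

namespace PTree

def concl : PTree → Cirquent
  | leaf C _ => C
  | un C _ _ => C
  | bin C _ _ _ => C

/-- Validity: each node follows from its children by the named rule. -/
def Valid : PTree → Prop
  | leaf C r =>
      (r = .emptyAx ∧ C = emptyCirquent) ∨ (r = .idAx ∧ ∃ F, C = idCirquent F)
  | un C r p => p.Valid ∧ unRel r p.concl C
  | bin C r p q => p.Valid ∧ q.Valid ∧ r = .mix ∧ MixStep p.concl q.concl C

/-- Number of applications of rule `r` in the proof. -/
def count (r : RuleName) : PTree → ℕ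
  | leaf _ r' => if r' = r then 1 else 0
  | un _ r' p => (if r' = r then 1 else 0) + p.count r
  | bin _ r' p q => (if r' = r then 1 else 0) + p.count r + q.count r

/-- The cirquents occurring in the proof. -/
def cirquents : PTree → List Cirquent
  | leaf C _ => [C]
  | un C _ p => C :: p.cirquents
  | bin C _ p q => C :: (p.cirquents ++ q.cirquents)

/-- Total number of rule applications (nodes). -/
def nodes : PTree → ℕ
  | leaf _ _ => 1
  | un _ _ p => p.nodes + 1
  | bin _ _ p q => p.nodes + q.nodes + 1

/-- Number of leaves of the proof tree. -/
def leavesCount : PTree → ℕ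
  | leaf _ _ => 1
  | un _ _ p => p.leavesCount
  | bin _ _ p q => p.leavesCount + q.leavesCount

end PTree

/-- A proof uses no duplication. -/
def DupFree (p : PTree) : Prop :=
  p.count RuleName.dupDown = 0 ∧ p.count RuleName.dupUp = 0

/-- Provability of a cirquent in CL5. -/
def ProvesC (C : Cirquent) : Prop := ∃ p : PTree, p.Valid ∧ p.concl = C

/-- Provability of a formula in CL5. -/
def ProvesCL5 (F : Fml) : Prop := ∃ p : PTree, p.Valid ∧ p.concl = fmlCirquent F

/-- Provability of a formula in CL5⁻ (CL5 without duplication). -/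
def ProvesCL5m (F : Fml) : Prop :=
  ∃ p : PTree, p.Valid ∧ DupFree p ∧ p.concl = fmlCirquent F

/-- Number of arcs of a cirquent (sum of the sizes of its ogroups). -/
def Cirquent.arcs (C : Cirquent) : ℕ := (C.groups.map Finset.card).sum

/-- Size of a cirquent: sum of the lengths of the oformulas in its pool plus
the sum of the sizes of its ogroups. -/
def Cirquent.size (C : Cirquent) : ℕ := (C.pool.map Fml.len).sum + C.arcs

/-- Size of a proof: the sum of the sizes of the cirquents it contains. -/
def PTree.size (p : PTree) : ℕ := (p.cirquents.map Cirquent.size).sum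

/-- Total number of positive occurrences of atoms in the pool. -/
def Cirquent.poolPosOcc (C : Cirquent) : ℕ := (C.pool.map Fml.posOcc).sum

end CirquentCalc

open CirquentCalc

/-!
Induction on the proof. A subproof without identity axioms has only empty-axiom leaves, so its
conclusion has no ogroups and a pool no longer than its number of pool weakenings. Every other
subproof is rebuilt without the empty axiom: an identity-free subproof can only enter as a
premise of mix, and that mix is replaced by pool weakenings of the other premise. The root
cirquent has an ogroup, so the whole proof does use an identity axiom.
-/

namespace CirquentCalc

def Cirquent.WellFormed (C : Cirquent) : Prop :=
  ∀ Γ ∈ C.groups, ∀ j ∈ Γ, j < C.pool.length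

namespace PTree

@[simp] theorem concl_leaf (C : Cirquent) (r : RuleName) : (leaf C r).concl = C := rfl

@[simp] theorem concl_un (C : Cirquent) (r : RuleName) (p : PTree) : (un C r p).concl = C := rfl

@[simp] theorem concl_bin (C : Cirquent) (r : RuleName) (p q : PTree) :
    (bin C r p q).concl = C := rfl

end PTree

theorem AndMerge.exists_mem_of_mem {i : ℕ} {l l' : List (Finset ℕ)} (h : AndMerge i l l')
    {Γ : Finset ℕ} (hΓ : Γ ∈ l') {j : ℕ} (hj : j ∈ Γ) : ∃ Δ ∈ l, j ∈ Δ := by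
  induction h with
  | nil => simp at hΓ
  | @skip Δ _ _ _ _ _ ih =>
    rcases List.mem_cons.mp hΓ with rfl | hΓ
    · exact ⟨Γ, List.mem_cons_self, hj⟩
    · obtain ⟨Δ', hΔ', hj'⟩ := ih hΓ
      exact ⟨Δ', List.mem_cons_of_mem _ hΔ', hj'⟩
  | @merge Δ₁ Δ₂ _ _ _ _ _ _ _ ih =>
    rcases List.mem_cons.mp hΓ with rfl | hΓ
    · rcases Finset.mem_union.mp hj with hj | hj
      · exact ⟨Δ₁, by simp, hj⟩
      · exact ⟨Δ₂, by simp, hj⟩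
    · obtain ⟨Δ', hΔ', hj'⟩ := ih hΓ
      exact ⟨Δ', by simp [hΔ'], hj'⟩

namespace Cirquent.WellFormed

variable {P C : Cirquent}

theorem of_groups_eq_map_image (hP : P.WellFormed) {f : ℕ → ℕ}
    (hf : ∀ j < P.pool.length, f j < C.pool.length)
    (hg : C.groups = P.groups.map (Finset.image f)) : C.WellFormed := by
  intro Γ hΓ j hj
  rw [hg, List.mem_map] at hΓ
  obtain ⟨Δ, hΔ, rfl⟩ := hΓ
  obtain ⟨i, hi, rfl⟩ := Finset.mem_image.mp hj
  exact hf i (hP Δ hΔ i hi)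

theorem of_groups_subset (hP : P.WellFormed) (hpool : C.pool = P.pool)
    (hg : ∀ Γ ∈ C.groups, ∃ Δ ∈ P.groups, Γ ⊆ Δ) : C.WellFormed := by
  intro Γ hΓ j hj
  obtain ⟨Δ, hΔ, hΓΔ⟩ := hg Γ hΓ
  exact hpool ▸ hP Δ hΔ j (hΓΔ hj)

theorem map_image_eq_self (hC : C.WellFormed) (k : ℕ) :
    C.groups.map (Finset.image fun j => if j < C.pool.length then j else j + k) = C.groups := by
  conv_rhs => rw [← List.map_id C.groups]
  refine List.map_congr_left fun Γ hΓ => ?_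
  conv_rhs => rw [← Finset.image_id (s := Γ)]
  exact Finset.image_congr fun j hj => if_pos (hC Γ hΓ j hj)

end Cirquent.WellFormed

theorem unRel_wellFormed {r : RuleName} {P C : Cirquent} (h : unRel r P C)
    (hP : P.WellFormed) : C.WellFormed := by
  cases r
  case emptyAx | idAx | mix => exact h.elim
  case ofExch =>
    obtain ⟨l₁, l₂, F, G, hP', hC, hg⟩ := (h : OfExchStep P C)
    refine hP.of_groups_eq_map_image (fun j hj => ?_) hg
    simp only [hP', hC, List.length_append, List.length_cons] at hj ⊢
    unfold swapIdx; split_ifs <;> omega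
  case poolWeak =>
    obtain ⟨l₁, l₂, F, hP', hC, hg⟩ := (h : PoolWeakStep P C)
    refine hP.of_groups_eq_map_image (fun j hj => ?_) hg
    simp only [hP', hC, List.length_append, List.length_cons] at hj ⊢
    unfold insShift; split_ifs <;> omega
  case orIntro =>
    obtain ⟨l₁, l₂, F, G, hP', hC, hg⟩ := (h : OrIntroStep P C)
    refine hP.of_groups_eq_map_image (fun j hj => ?_) hg
    simp only [hP', hC, List.length_append, List.length_cons] at hj ⊢
    unfold mergeIdx; split_ifs <;> omega
  case andIntro =>
    obtain ⟨l₁, l₂, F, G, merged, hP', hC, hm, hg⟩ := (h : AndIntroStep P C)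
    have hmerged : Cirquent.WellFormed ⟨P.pool, merged⟩ := fun Γ hΓ j hj =>
      have ⟨Δ, hΔ, hjΔ⟩ := hm.exists_mem_of_mem hΓ hj
      hP Δ hΔ j hjΔ
    refine hmerged.of_groups_eq_map_image (fun j hj => ?_) hg
    simp only [hP', hC, List.length_append, List.length_cons] at hj ⊢
    unfold mergeIdx; split_ifs <;> omega
  case ogExch =>
    obtain ⟨hpool, g₁, g₂, Γ, Δ, hPg, hCg⟩ := (h : OgExchStep P C)
    refine hP.of_groups_subset hpool fun Θ hΘ => ⟨Θ, ?_, subset_rfl⟩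
    simp only [hPg, hCg, List.mem_append, List.mem_cons] at hΘ ⊢
    tauto
  case dupDown =>
    obtain ⟨hpool, g₁, g₂, Γ, hPg, hCg⟩ := (h : DupDownStep P C)
    refine hP.of_groups_subset hpool fun Θ hΘ => ⟨Θ, ?_, subset_rfl⟩
    simp only [hPg, hCg, List.mem_append, List.mem_cons] at hΘ ⊢
    tauto
  case dupUp =>
    obtain ⟨hpool, g₁, g₂, Γ, hPg, hCg⟩ := (h : DupUpStep P C)
    refine hP.of_groups_subset hpool fun Θ hΘ => ⟨Θ, ?_, subset_rfl⟩
    simp only [hPg, hCg, List.mem_append, List.mem_cons] at hΘ ⊢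
    tauto
  case ogWeak =>
    obtain ⟨hpool, g₁, g₂, Γ, i, hi, -, hPg, hCg⟩ := (h : OgWeakStep P C)
    intro Θ hΘ j hj
    rw [hpool]
    simp only [hCg, List.mem_append, List.mem_cons] at hΘ
    have hbound : ∀ Θ ∈ g₁ ++ Γ :: g₂, ∀ j ∈ Θ, j < P.pool.length := hPg ▸ hP
    rcases hΘ with hΘ | rfl | hΘ
    · exact hbound Θ (by simp [hΘ]) j hj
    · rcases Finset.mem_insert.mp hj with rfl | hj
      · exact hi
      · exact hbound Γ (by simp) j hj
    · exact hbound Θ (by simp [hΘ]) j hj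

theorem MixStep.wellFormed {A B C : Cirquent} (h : MixStep A B C) (hA : A.WellFormed)
    (hB : B.WellFormed) : C.WellFormed := by
  obtain ⟨hpool, hg⟩ := h
  intro Γ hΓ j hj
  rw [hpool, List.length_append]
  rw [hg, List.mem_append, List.mem_map] at hΓ
  rcases hΓ with hΓ | ⟨Δ, hΔ, rfl⟩
  · exact Nat.lt_add_right _ (hA Γ hΓ j hj)
  · obtain ⟨i, hi, rfl⟩ := Finset.mem_image.mp hj
    have := hB Δ hΔ i hi
    omega

theorem PTree.Valid.wellFormed {p : PTree} (hp : p.Valid) : p.concl.WellFormed := by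
  induction p with
  | leaf C r =>
    rcases hp with ⟨-, rfl⟩ | ⟨-, F, rfl⟩
    · simp [Cirquent.WellFormed, emptyCirquent]
    · intro Γ hΓ j hj
      simp only [PTree.concl_leaf, idCirquent, List.mem_singleton] at hΓ ⊢
      subst hΓ
      simp only [Finset.mem_insert, Finset.mem_singleton] at hj
      simp only [List.length_cons, List.length_nil]
      omega
  | un C r a ih => exact unRel_wellFormed hp.2 (ih hp.1)
  | bin C r a b iha ihb => exact MixStep.wellFormed hp.2.2.2 (iha hp.1) (ihb hp.2.1)

theorem unRel_groups_eq_nil {r : RuleName} {P C : Cirquent} (h : unRel r P C)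
    (hP : P.groups = []) :
    C.groups = [] ∧ C.pool.length ≤ P.pool.length + if r = .poolWeak then 1 else 0 := by
  cases r
  case emptyAx | idAx | mix => exact h.elim
  case ofExch =>
    obtain ⟨l₁, l₂, F, G, hP', hC, hg⟩ := (h : OfExchStep P C)
    simp [hg, hP, hP', hC]
  case poolWeak =>
    obtain ⟨l₁, l₂, F, hP', hC, hg⟩ := (h : PoolWeakStep P C)
    simp [hg, hP, hP', hC]
    omega
  case orIntro =>
    obtain ⟨l₁, l₂, F, G, hP', hC, hg⟩ := (h : OrIntroStep P C)
    simp [hg, hP, hP', hC]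
  case andIntro =>
    obtain ⟨l₁, l₂, F, G, merged, hP', hC, hm, hg⟩ := (h : AndIntroStep P C)
    rw [hP] at hm
    cases hm
    simp [hg, hP', hC]
  case ogExch =>
    obtain ⟨-, g₁, g₂, Γ, Δ, hPg, -⟩ := (h : OgExchStep P C)
    simp [hP] at hPg
  case ogWeak =>
    obtain ⟨-, g₁, g₂, Γ, i, -, -, hPg, -⟩ := (h : OgWeakStep P C)
    simp [hP] at hPg
  case dupDown =>
    obtain ⟨-, g₁, g₂, Γ, hPg, -⟩ := (h : DupDownStep P C)
    simp [hP] at hPg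
  case dupUp =>
    obtain ⟨-, g₁, g₂, Γ, hPg, -⟩ := (h : DupUpStep P C)
    simp [hP] at hPg

/-- Without identity axioms every leaf is the empty cirquent; no rule creates an ogroup where
there is none, and only pool weakening lengthens the pool. -/
theorem PTree.Valid.groups_eq_nil_of_count_idAx_eq_zero {p : PTree} (hp : p.Valid)
    (hid : p.count .idAx = 0) :
    p.concl.groups = [] ∧ p.concl.pool.length ≤ p.count .poolWeak := by
  induction p with
  | leaf C r =>
    rcases hp with ⟨-, rfl⟩ | ⟨rfl, -⟩
    · simp [emptyCirquent]
    · simp [PTree.count] at hid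
  | un C r a ih =>
    simp only [PTree.count, Nat.add_eq_zero_iff] at hid
    obtain ⟨hga, hla⟩ := ih hp.1 hid.2
    obtain ⟨hgC, hlC⟩ := unRel_groups_eq_nil hp.2 hga
    refine ⟨hgC, hlC.trans ?_⟩
    simp only [PTree.count]
    omega
  | bin C r a b iha ihb =>
    obtain ⟨hva, hvb, -, hpool, hg⟩ := hp
    simp only [PTree.count, Nat.add_eq_zero_iff] at hid
    obtain ⟨hga, hla⟩ := iha hva hid.1.2
    obtain ⟨hgb, hlb⟩ := ihb hvb hid.2
    simp only [PTree.count, PTree.concl_bin]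
    refine ⟨by simp [hg, hga, hgb], ?_⟩
    rw [hpool, List.length_append]
    omega

theorem PTree.Valid.exists_poolWeak_insert {q : PTree} (hq : q.Valid) {l₁ l₂ : List Fml}
    (hpool : q.concl.pool = l₁ ++ l₂) (L : List Fml) :
    ∃ q' : PTree, q'.Valid ∧
      q'.concl = ⟨l₁ ++ L ++ l₂, q.concl.groups.map
        (Finset.image fun j => if j < l₁.length then j else j + L.length)⟩ ∧
      ∀ r, q'.count r = q.count r + if r = .poolWeak then L.length else 0 := by
  induction L with
  | nil =>
    refine ⟨q, hq, ?_, fun r => by simp⟩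
    have himage_id : (Finset.image fun j : ℕ => j) = id := funext fun _ => Finset.image_id'
    simp only [List.append_nil, ← hpool, List.length_nil, Nat.add_zero, ite_self, himage_id,
      List.map_id]
  | cons F L ih =>
    obtain ⟨q₁, hq₁, hc₁, hcount₁⟩ := ih
    have hshift : ∀ Γ : Finset ℕ, Finset.image (insShift l₁.length)
        (Finset.image (fun j => if j < l₁.length then j else j + L.length) Γ) =
        Finset.image (fun j => if j < l₁.length then j else j + (F :: L).length) Γ := by
      intro Γ
      rw [Finset.image_image]
      refine Finset.image_congr fun j _ => ?_
      simp only [Function.comp_apply, insShift, List.length_cons]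
      split_ifs <;> omega
    refine ⟨.un _ .poolWeak q₁, ⟨hq₁, l₁, L ++ l₂, F, by simp [hc₁], ?_, ?_⟩, rfl, fun r => ?_⟩
    · simp
    · simp [hc₁, hshift]
    · rw [PTree.count, hcount₁, List.length_cons]
      by_cases hr : r = .poolWeak
      · simp only [hr, if_true]
        omega
      · simp [hr, Ne.symm hr]

structure PTree.EmptyAxFreeRewrite (q p : PTree) : Prop where
  valid : q.Valid
  concl_eq : q.concl = p.concl
  count_emptyAx : q.count .emptyAx = 0
  count_le : ∀ r, r ≠ .emptyAx → q.count r ≤ p.count r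

namespace PTree.EmptyAxFreeRewrite

theorem refl {p : PTree} (hp : p.Valid) (h : p.count .emptyAx = 0) : p.EmptyAxFreeRewrite p :=
  ⟨hp, rfl, h, fun _ _ => le_rfl⟩

theorem un {q p : PTree} (h : q.EmptyAxFreeRewrite p) {r : RuleName} {C : Cirquent}
    (hstep : unRel r p.concl C) : (PTree.un C r q).EmptyAxFreeRewrite (PTree.un C r p) := by
  have hr : r ≠ .emptyAx := by
    rintro rfl
    exact hstep
  refine ⟨⟨h.valid, h.concl_eq ▸ hstep⟩, rfl, ?_, fun r' hr' => ?_⟩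
  · simp [PTree.count, hr, h.count_emptyAx]
  · simpa only [PTree.count] using Nat.add_le_add_left (h.count_le r' hr') _

theorem mix {qa a qb b : PTree} (ha : qa.EmptyAxFreeRewrite a) (hb : qb.EmptyAxFreeRewrite b)
    {C : Cirquent} (hmix : MixStep a.concl b.concl C) :
    (bin C .mix qa qb).EmptyAxFreeRewrite (bin C .mix a b) := by
  refine ⟨⟨ha.valid, hb.valid, rfl, ha.concl_eq ▸ hb.concl_eq ▸ hmix⟩, rfl, ?_, fun r hr => ?_⟩
  · simp [PTree.count, ha.count_emptyAx, hb.count_emptyAx]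
  · have := ha.count_le r hr
    have := hb.count_le r hr
    simp only [PTree.count]
    omega

/-- A premise of mix without identity axioms is replaced by pool weakenings of the other one. -/
theorem exists_mix_of_right_count_idAx_eq_zero {qa a b : PTree} (ha : qa.EmptyAxFreeRewrite a)
    (hb : b.Valid) (hbid : b.count .idAx = 0) {C : Cirquent} (hmix : MixStep a.concl b.concl C) :
    ∃ q : PTree, q.EmptyAxFreeRewrite (bin C .mix a b) := by
  obtain ⟨hgb, hlb⟩ := hb.groups_eq_nil_of_count_idAx_eq_zero hbid
  obtain ⟨q, hq, hconcl, hcount⟩ :=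
    ha.valid.exists_poolWeak_insert (l₂ := []) (List.append_nil _).symm b.concl.pool
  refine ⟨q, hq, ?_, by simp [hcount, ha.count_emptyAx], fun r hr => ?_⟩
  · obtain ⟨hpool, hg⟩ := hmix
    rw [hconcl, ha.valid.wellFormed.map_image_eq_self, concl_bin, ha.concl_eq]
    cases C
    simp_all
  · have := ha.count_le r hr
    rcases eq_or_ne r .poolWeak with rfl | hpw
    · simp only [hcount, PTree.count, if_true]
      omega
    · simp only [hcount, PTree.count, hpw, if_false]
      omega

theorem exists_mix_of_left_count_idAx_eq_zero {a qb b : PTree} (ha : a.Valid)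
    (haid : a.count .idAx = 0) (hb : qb.EmptyAxFreeRewrite b) {C : Cirquent}
    (hmix : MixStep a.concl b.concl C) :
    ∃ q : PTree, q.EmptyAxFreeRewrite (bin C .mix a b) := by
  obtain ⟨hga, hla⟩ := ha.groups_eq_nil_of_count_idAx_eq_zero haid
  obtain ⟨q, hq, hconcl, hcount⟩ :=
    hb.valid.exists_poolWeak_insert (l₁ := []) (List.nil_append _).symm a.concl.pool
  refine ⟨q, hq, ?_, by simp [hcount, hb.count_emptyAx], fun r hr => ?_⟩
  · obtain ⟨hpool, hg⟩ := hmix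
    rw [hconcl, concl_bin, hb.concl_eq]
    cases C
    simp_all
  · have := hb.count_le r hr
    rcases eq_or_ne r .poolWeak with rfl | hpw
    · simp only [hcount, PTree.count, if_true]
      omega
    · simp only [hcount, PTree.count, hpw, if_false]
      omega

end PTree.EmptyAxFreeRewrite

theorem PTree.Valid.exists_emptyAxFreeRewrite {p : PTree} (hp : p.Valid)
    (hid : p.count .idAx ≠ 0) : ∃ q : PTree, q.EmptyAxFreeRewrite p := by
  induction p with
  | leaf C r =>
    have hv := hp
    rcases hp with ⟨rfl, -⟩ | ⟨rfl, -⟩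
    · simp [PTree.count] at hid
    · exact ⟨_, .refl hv (by simp [PTree.count])⟩
  | un C r a ih =>
    have hr : r ≠ .idAx := by
      rintro rfl
      exact hp.2
    simp only [PTree.count, hr, if_false, Nat.zero_add] at hid
    obtain ⟨q, hq⟩ := ih hp.1 hid
    exact ⟨_, hq.un hp.2⟩
  | bin C r a b iha ihb =>
    obtain ⟨hva, hvb, rfl, hmix⟩ := hp
    by_cases haid : a.count .idAx = 0
    · have hbid : b.count .idAx ≠ 0 := by
        simp_all [PTree.count]
      obtain ⟨qb, hqb⟩ := ihb hvb hbid
      exact PTree.EmptyAxFreeRewrite.exists_mix_of_left_count_idAx_eq_zero hva haid hqb hmix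
    · obtain ⟨qa, hqa⟩ := iha hva haid
      by_cases hbid : b.count .idAx = 0
      · exact hqa.exists_mix_of_right_count_idAx_eq_zero hvb hbid hmix
      · obtain ⟨qb, hqb⟩ := ihb hvb hbid
        exact ⟨_, hqa.mix hqb hmix⟩

end CirquentCalc

/-- If F has a CL5⁻ proof, then F has a CL5⁻ proof with no
application of the empty cirquent axiom and no more applications of each other
rule than the original proof. -/
theorem cl5m_remove_empty_axiom (F : Fml) (p : PTree)
    (hv : p.Valid) (hd : DupFree p) (hc : p.concl = fmlCirquent F) :
    ∃ q : PTree, q.Valid ∧ DupFree q ∧ q.concl = fmlCirquent F ∧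
      q.count RuleName.emptyAx = 0 ∧
      ∀ r : RuleName, r ≠ RuleName.emptyAx → q.count r ≤ p.count r := by
  have hid : p.count .idAx ≠ 0 := fun hid => by
    simpa [hc, fmlCirquent] using (hv.groups_eq_nil_of_count_idAx_eq_zero hid).1
  obtain ⟨q, hq⟩ := hv.exists_emptyAxFreeRewrite hid
  have hdup : DupFree q :=
    ⟨Nat.le_zero.mp (hd.1 ▸ hq.count_le .dupDown nofun),
      Nat.le_zero.mp (hd.2 ▸ hq.count_le .dupUp nofun)⟩
  exact ⟨q, hq.valid, hdup, hq.concl_eq.trans hc, hq.count_emptyAx, hq.count_le⟩
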